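/- arXiv:2507.13342 — 7 statements merged into one kernel-verified Lean document; each statement's English description precedes it below -/
import Mathlib

section
/- Let H ∈ F₂^{m×n} be (δ,γ)-expanding, let 0 < ε < δγ/2 and 0 < ξ < (δ − 2ε/γ)/2. If v₀, v₁, …, v_ℓ ∈ F₂ⁿ satisfy |H v_i| < εn for all 0 ≤ i ≤ ℓ and |v_i ⊕ v_{i+1}| < ξn for all 0 ≤ i < ℓ, then |v₀ ⊕ v_ℓ| ≤ (2ε/γ)·n. Consequently every ξ-cluster of Ω(ε) has Hamming diameter at most (2ε/γ)·n. -/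
/-!
Two words of energy `< εn` are either within `(2ε/γ)n` of each other or more than `δn` apart:
if `|x ⊕ y| ≤ δn`, expansion gives `γ|x ⊕ y| ≤ |Hx ⊕ Hy| < 2εn`. Since
`(2ε/γ)n + ξn < δn`, a walk from `v₀` with steps shorter than `ξn` can never cross this gap.
-/

/-- A binary matrix `H ∈ F₂^{m×n}` is `(δ,γ)`-expanding if every `x ∈ F₂ⁿ`
with Hamming weight `|x| ≤ δn` satisfies `|Hx| ≥ γ|x|`. -/
def IsExpanding {m n : ℕ} (H : Matrix (Fin m) (Fin n) (ZMod 2)) (δ γ : ℝ) : Prop :=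
  ∀ x : Fin n → ZMod 2, (hammingNorm x : ℝ) ≤ δ * n →
    γ * (hammingNorm x : ℝ) ≤ (hammingNorm (H.mulVec x) : ℝ)

lemma hammingNorm_add_eq_hammingDist {ι : Type*} [Fintype ι] (x y : ι → ZMod 2) :
    hammingNorm (x + y) = hammingDist x y := by
  have hneg : -x = x := funext fun i => ZMod.neg_eq_self_mod_two (x i)
  rw [hammingDist_eq_hammingNorm, hneg]

lemma forall_le_of_gap_of_step_lt {d : ℕ → ℝ} {ℓ : ℕ} {r s R : ℝ} (hR : r + s ≤ R)
    (h0 : d 0 ≤ r) (hstep : ∀ i < ℓ, d (i + 1) < d i + s)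
    (hgap : ∀ i ≤ ℓ, d i ≤ R → d i ≤ r) : ∀ i ≤ ℓ, d i ≤ r := by
  intro i
  induction i with
  | zero => exact fun _ => h0
  | succ j ih =>
    intro hj
    have hdj := ih (Nat.le_of_succ_le hj)
    exact hgap (j + 1) hj (by linarith [hstep j hj])

lemma IsExpanding.hammingDist_lt {m n : ℕ} {H : Matrix (Fin m) (Fin n) (ZMod 2)}
    {δ γ ε : ℝ} (hexp : IsExpanding H δ γ) (hγ : 0 < γ) {x y : Fin n → ZMod 2}
    (hx : (hammingNorm (H.mulVec x) : ℝ) < ε * n)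
    (hy : (hammingNorm (H.mulVec y) : ℝ) < ε * n)
    (hxy : (hammingDist x y : ℝ) ≤ δ * n) :
    (hammingDist x y : ℝ) < 2 * ε / γ * n := by
  rw [← hammingNorm_add_eq_hammingDist] at hxy ⊢
  have hsyndrome : (hammingNorm (H.mulVec (x + y)) : ℝ) < 2 * ε * n := by
    rw [Matrix.mulVec_add, hammingNorm_add_eq_hammingDist]
    calc (hammingDist (H.mulVec x) (H.mulVec y) : ℝ)
        ≤ hammingDist 0 (H.mulVec x) + hammingDist 0 (H.mulVec y) := by
          exact_mod_cast hammingDist_triangle_left _ _ 0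
      _ < ε * n + ε * n := by
          simpa only [hammingDist_zero_left] using add_lt_add hx hy
      _ = 2 * ε * n := by ring
  rw [div_mul_eq_mul_div, lt_div_iff₀ hγ, mul_comm]
  exact (hexp _ hxy).trans_lt hsyndrome

theorem cluster_diameter_general {m n : ℕ} (H : Matrix (Fin m) (Fin n) (ZMod 2))
    (δ γ ε ξ : ℝ) (hγ : 0 < γ) (hexp : IsExpanding H δ γ)
    (hε0 : 0 < ε)
    (hξ0 : 0 < ξ) (hξ : ξ < (δ - 2 * ε / γ) / 2)
    (ℓ : ℕ) (v : ℕ → Fin n → ZMod 2)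
    (henergy : ∀ i ≤ ℓ, (hammingNorm (H.mulVec (v i)) : ℝ) < ε * n)
    (hstep : ∀ i < ℓ, (hammingNorm (v i + v (i + 1)) : ℝ) < ξ * n) :
    (hammingNorm (v 0 + v ℓ) : ℝ) ≤ (2 * ε / γ) * n := by
  simp only [hammingNorm_add_eq_hammingDist] at hstep ⊢
  have hwidth : 2 * ε / γ * n + ξ * n ≤ δ * n := by
    rw [← add_mul]
    exact mul_le_mul_of_nonneg_right (by linarith) n.cast_nonneg
  refine forall_le_of_gap_of_step_lt (d := fun i => (hammingDist (v 0) (v i) : ℝ))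
    hwidth ?_ (fun i hi => ?_) (fun i hi hfar => ?_) ℓ le_rfl
  · simp only [hammingDist_self, Nat.cast_zero]
    positivity
  · calc (hammingDist (v 0) (v (i + 1)) : ℝ)
        ≤ hammingDist (v 0) (v i) + hammingDist (v i) (v (i + 1)) := by
          exact_mod_cast hammingDist_triangle _ _ _
      _ < hammingDist (v 0) (v i) + ξ * n := by linarith [hstep i hi]
  · exact (hexp.hammingDist_lt hγ (henergy 0 (Nat.zero_le ℓ)) (henergy i hi) hfar).le

/-- let `H` be `(δ,γ)`-expanding, `0 < ε < δγ/2` and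
`0 < ξ < (δ − 2ε/γ)/2`. If `v₀, …, v_ℓ` all have energy `|H vᵢ| < εn` and
consecutive members differ in fewer than `ξn` coordinates, then
`|v₀ ⊕ v_ℓ| ≤ (2ε/γ)n`; consequently every ξ-cluster of `Ω(ε)` has Hamming
diameter at most `(2ε/γ)n`. -/
theorem cluster_diameter {m n : ℕ} (H : Matrix (Fin m) (Fin n) (ZMod 2))
    (δ γ ε ξ : ℝ) (hδ : 0 < δ) (hγ : 0 < γ) (hexp : IsExpanding H δ γ)
    (hε0 : 0 < ε) (hε : ε < δ * γ / 2)
    (hξ0 : 0 < ξ) (hξ : ξ < (δ - 2 * ε / γ) / 2)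
    (ℓ : ℕ) (v : ℕ → Fin n → ZMod 2)
    (henergy : ∀ i ≤ ℓ, (hammingNorm (H.mulVec (v i)) : ℝ) < ε * n)
    (hstep : ∀ i < ℓ, (hammingNorm (v i + v (i + 1)) : ℝ) < ξ * n) :
    (hammingNorm (v 0 + v ℓ) : ℝ) ≤ (2 * ε / γ) * n :=
  cluster_diameter_general H δ γ ε ξ hγ hexp hε0 hξ0 hξ ℓ v henergy hstep
end

section
/- Let H ∈ F₂^{m×n} have rank m over F₂, and let β > 0, ω > 0. With p_G(x) = e^{−β|Hx|}/Z, Z = Σ_{x} e^{−β|Hx|}, and mean energy ⟨E⟩_β = Σ_x p_G(x)·|Hx|, the Gibbs weight of the microcanonical shell Ξ_ω(β) satisfies p_G(Ξ_ω(β)) ≥ 1 − 2·exp(−ω²n²/(2m)); equivalently, Σ over all x with | |Hx| − ⟨E⟩_β | > ωn of p_G(x) is at most 2·exp(−ω²n²/(2m)). -/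
/-!
Since `H` has full row rank, `x ↦ Hx` maps `F₂ⁿ` onto `F₂ᵐ` with fibres of equal size, so the
Gibbs measure of `|Hx|` on `F₂ⁿ` pushes forward to the Gibbs measure of the Hamming weight on
`F₂ᵐ`, and the mean energy and the shell weight can be computed there. Because the Hamming
weight is a sum of coordinate energies, that Gibbs measure is the product of `m` Bernoulli
measures, and Hoeffding's inequality bounds the weight outside the shell by `2 exp(-2ω²n²/m)`,
which is at most `2 exp(-ω²n²/(2m))`.
-/

open MeasureTheory ProbabilityTheory Finset Real
open scoped NNReal

section Gibbs

variable {α : Type*} [Fintype α] (β : ℝ) (E : α → ℝ)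

noncomputable def gibbsWeight (a : α) : ℝ :=
  exp (-β * E a) / ∑ b, exp (-β * E b)

lemma gibbsWeight_nonneg (a : α) : 0 ≤ gibbsWeight β E a := by
  unfold gibbsWeight; positivity

lemma sum_gibbsWeight [Nonempty α] : ∑ a, gibbsWeight β E a = 1 := by
  simp only [gibbsWeight]
  rw [← sum_div, div_self]
  exact (sum_pos (fun _ _ ↦ exp_pos _) univ_nonempty).ne'

variable [MeasurableSpace α] [Nonempty α]

noncomputable def gibbsMeasure : Measure α :=
  (PMF.ofFintype (fun a ↦ ENNReal.ofReal (gibbsWeight β E a)) <| by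
    rw [← ENNReal.ofReal_sum_of_nonneg fun a _ ↦ gibbsWeight_nonneg β E a, sum_gibbsWeight,
      ENNReal.ofReal_one]).toMeasure

instance : IsProbabilityMeasure (gibbsMeasure β E) := by
  unfold gibbsMeasure; infer_instance

variable [MeasurableSingletonClass α]

lemma measureReal_gibbsMeasure (s : Finset α) :
    (gibbsMeasure β E).real s = ∑ a ∈ s, gibbsWeight β E a := by
  rw [measureReal_def, gibbsMeasure, PMF.toMeasure_apply_finset]
  simp only [PMF.ofFintype_apply]
  rw [← ENNReal.ofReal_sum_of_nonneg fun a _ ↦ gibbsWeight_nonneg β E a,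
    ENNReal.toReal_ofReal (sum_nonneg fun a _ ↦ gibbsWeight_nonneg β E a)]

lemma measureReal_gibbsMeasure_singleton (a : α) :
    (gibbsMeasure β E).real {a} = gibbsWeight β E a := by
  simpa using measureReal_gibbsMeasure β E {a}

lemma integral_gibbsMeasure (f : α → ℝ) :
    ∫ a, f a ∂gibbsMeasure β E = ∑ a, gibbsWeight β E a * f a := by
  simp [integral_fintype (Integrable.of_finite), measureReal_gibbsMeasure_singleton]

end Gibbs

lemma gibbsWeight_sum_pi {ι : Type*} [Fintype ι] [DecidableEq ι] {α : ι → Type*}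
    [∀ i, Fintype (α i)] (β : ℝ) (E : ∀ i, α i → ℝ) (y : ∀ i, α i) :
    gibbsWeight β (fun y ↦ ∑ i, E i (y i)) y = ∏ i, gibbsWeight β (E i) (y i) := by
  have hexp : ∀ y : ∀ i, α i, exp (-β * ∑ i, E i (y i)) = ∏ i, exp (-β * E i (y i)) := fun y ↦ by
    rw [mul_sum, exp_sum]
  simp only [gibbsWeight, hexp, prod_div_distrib, prod_univ_sum, Fintype.piFinset_univ]

lemma gibbsMeasure_sum_eq_pi {ι : Type*} [Fintype ι] [DecidableEq ι] {α : ι → Type*}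
    [∀ i, Fintype (α i)] [∀ i, MeasurableSpace (α i)] [∀ i, MeasurableSingletonClass (α i)]
    [∀ i, Nonempty (α i)] (β : ℝ) (E : ∀ i, α i → ℝ) :
    gibbsMeasure β (fun y ↦ ∑ i, E i (y i)) = Measure.pi fun i ↦ gibbsMeasure β (E i) := by
  refine ext_iff_measureReal_singleton.2 fun y ↦ ?_
  rw [measureReal_gibbsMeasure_singleton, gibbsWeight_sum_pi, measureReal_def, Measure.pi_singleton,
    ENNReal.toReal_prod]
  simp only [← measureReal_def, measureReal_gibbsMeasure_singleton]

lemma map_gibbsMeasure_comp_of_card_fiber {α α' : Type*} [Fintype α] [Fintype α'] [DecidableEq α']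
    [MeasurableSpace α] [MeasurableSingletonClass α] [Nonempty α]
    [MeasurableSpace α'] [MeasurableSingletonClass α'] [Nonempty α']
    (β : ℝ) (E : α' → ℝ) (φ : α → α') {k : ℕ} (hk : ∀ y, #{x | φ x = y} = k) :
    (gibbsMeasure β (E ∘ φ)).map φ = gibbsMeasure β E := by
  have hk0 : (k : ℝ) ≠ 0 := by
    obtain ⟨x⟩ := ‹Nonempty α›
    rw [Nat.cast_ne_zero, ← hk (φ x)]
    exact (card_pos.2 ⟨x, by simp⟩).ne'
  have hfiber : ∀ (g : α' → ℝ) y, ∑ x ∈ {x | φ x = y}, g (φ x) = k * g y := fun g y ↦ by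
    rw [sum_congr rfl fun x hx ↦ by rw [(mem_filter.1 hx).2], sum_const, hk, nsmul_eq_mul]
  have hsum : ∀ g : α' → ℝ, ∑ x, g (φ x) = k * ∑ y, g y := fun g ↦ by
    rw [← sum_fiberwise univ φ, mul_sum]
    exact sum_congr rfl fun y _ ↦ hfiber g y
  refine ext_iff_measureReal_singleton.2 fun y ↦ ?_
  have hpre : φ ⁻¹' {y} = ↑({x | φ x = y} : Finset α) := by ext; simp
  rw [map_measureReal_apply (measurable_of_finite φ) (measurableSet_singleton y), hpre,
    measureReal_gibbsMeasure, measureReal_gibbsMeasure_singleton]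
  simp only [gibbsWeight, Function.comp_apply]
  rw [← sum_div, hfiber fun y ↦ exp (-β * E y), hsum fun y ↦ exp (-β * E y)]
  field_simp

lemma map_gibbsMeasure_comp_of_surjective {G G' : Type*} [AddGroup G] [Fintype G]
    [AddGroup G'] [Fintype G'] [DecidableEq G']
    [MeasurableSpace G] [MeasurableSingletonClass G]
    [MeasurableSpace G'] [MeasurableSingletonClass G']
    (β : ℝ) (E : G' → ℝ) (φ : G →+ G') (hφ : Function.Surjective φ) :
    (gibbsMeasure β (E ∘ φ)).map φ = gibbsMeasure β E :=
  map_gibbsMeasure_comp_of_card_fiber β E φ fun y ↦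
    AddMonoidHom.card_fiber_eq_of_mem_range φ (hφ y) (hφ 0)

lemma ProbabilityTheory.HasSubgaussianMGF.measureReal_abs_ge_le {Ω : Type*} [MeasurableSpace Ω]
    {μ : Measure Ω} [IsFiniteMeasure μ] {X : Ω → ℝ} {c : ℝ≥0} (h : HasSubgaussianMGF X c μ)
    {ε : ℝ} (hε : 0 ≤ ε) :
    μ.real {ω | ε ≤ |X ω|} ≤ 2 * exp (-ε ^ 2 / (2 * c)) := by
  have hsplit : {ω | ε ≤ |X ω|} = {ω | ε ≤ X ω} ∪ {ω | ε ≤ (-X) ω} := by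
    ext ω; simp [le_abs', le_neg, or_comm]
  calc μ.real {ω | ε ≤ |X ω|} ≤ μ.real {ω | ε ≤ X ω} + μ.real {ω | ε ≤ (-X) ω} :=
        hsplit ▸ measureReal_union_le _ _
    _ ≤ exp (-ε ^ 2 / (2 * c)) + exp (-ε ^ 2 / (2 * c)) :=
        add_le_add (h.measure_ge_le hε) (h.neg.measure_ge_le hε)
    _ = 2 * exp (-ε ^ 2 / (2 * c)) := by ring

lemma measureReal_abs_sum_sub_integral_ge_le_pi {ι : Type*} [Fintype ι] {Ω : ι → Type*}
    [∀ i, MeasurableSpace (Ω i)] (μ : ∀ i, Measure (Ω i)) [∀ i, IsProbabilityMeasure (μ i)]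
    {X : ∀ i, Ω i → ℝ} (hX : ∀ i, Measurable (X i)) {a b : ℝ}
    (hXab : ∀ i ω, X i ω ∈ Set.Icc a b) {ε : ℝ} (hε : 0 ≤ ε) :
    (Measure.pi μ).real {ω | ε ≤ |∑ i, X i (ω i) - ∫ ω', ∑ i, X i (ω' i) ∂Measure.pi μ|} ≤
      2 * exp (-2 * ε ^ 2 / (Fintype.card ι * (b - a) ^ 2)) := by
  set ν := Measure.pi μ
  have hmeas : ∀ i, AEMeasurable (fun ω : ∀ i, Ω i ↦ X i (ω i)) ν := fun i ↦
    ((hX i).comp (measurable_pi_apply i)).aemeasurable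
  have hbdd : ∀ i, ∀ᵐ ω ∂ν, X i (ω i) ∈ Set.Icc a b := fun i ↦ ae_of_all _ fun ω ↦ hXab i (ω i)
  have hindep : iIndepFun (fun i ω ↦ X i (ω i) - ν[fun ω ↦ X i (ω i)]) ν :=
    iIndepFun_pi (X := fun i x ↦ X i x - ν[fun ω ↦ X i (ω i)]) fun i ↦
      ((hX i).sub_const _).aemeasurable
  have hsub := HasSubgaussianMGF.sum_of_iIndepFun hindep (s := univ)
    fun i _ ↦ hasSubgaussianMGF_of_mem_Icc (hmeas i) (hbdd i)
  have hcenter : ∀ ω : ∀ i, Ω i, ∑ i, (X i (ω i) - ν[fun ω ↦ X i (ω i)]) =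
      ∑ i, X i (ω i) - ∫ ω', ∑ i, X i (ω' i) ∂ν := fun ω ↦ by
    rw [integral_finsetSum _ fun i _ ↦ Integrable.of_mem_Icc a b (hmeas i) (hbdd i),
      sum_sub_distrib]
  refine ((hsub.congr (ae_of_all _ hcenter)).measureReal_abs_ge_le hε).trans_eq ?_
  congr 2
  simp only [sum_const, card_univ, nsmul_eq_mul, NNReal.coe_mul, NNReal.coe_natCast,
    NNReal.coe_pow, NNReal.coe_div, coe_nnnorm, Real.norm_eq_abs, NNReal.coe_ofNat]
  rw [div_pow, sq_abs, ← div_pow, show (2 : ℝ) * (Fintype.card ι * ((b - a) / 2) ^ 2) =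
    Fintype.card ι * (b - a) ^ 2 / 2 by ring, div_div_eq_mul_div]
  ring

lemma hammingNorm_eq_sum {ι : Type*} [Fintype ι] {α : ι → Type*} [∀ i, DecidableEq (α i)]
    [∀ i, Zero (α i)] (x : ∀ i, α i) :
    (hammingNorm x : ℝ) = ∑ i, if x i ≠ 0 then 1 else 0 := by
  rw [hammingNorm, card_filter, Nat.cast_sum]
  push_cast
  rfl

lemma one_sub_le_measureReal_abs_hammingNorm_sub_integral_le {ι : Type*} [Fintype ι]
    [DecidableEq ι] {α : ι → Type*} [∀ i, Fintype (α i)] [∀ i, DecidableEq (α i)]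
    [∀ i, Zero (α i)] [∀ i, MeasurableSpace (α i)] [∀ i, MeasurableSingletonClass (α i)]
    (β : ℝ) {ε : ℝ} (hε : 0 ≤ ε) :
    let μ := gibbsMeasure β fun y : ∀ i, α i ↦ (hammingNorm y : ℝ)
    1 - 2 * exp (-2 * ε ^ 2 / Fintype.card ι) ≤
      μ.real {y | |(hammingNorm y : ℝ) - ∫ y', (hammingNorm y' : ℝ) ∂μ| ≤ ε} := by
  intro μ
  set X : ∀ i, α i → ℝ := fun i b ↦ if b ≠ 0 then 1 else 0
  set S : (∀ i, α i) → ℝ := fun y ↦ ∑ i, X i (y i)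
  have hμ : μ = Measure.pi fun i ↦ gibbsMeasure β (X i) := by
    rw [← gibbsMeasure_sum_eq_pi β X]
    simp only [μ, X, hammingNorm_eq_sum]
  have hS : ∀ y, (hammingNorm y : ℝ) = S y := hammingNorm_eq_sum
  simp only [hS]
  have htail : μ.real {y | ε ≤ |S y - ∫ y', S y' ∂μ|} ≤
      2 * exp (-2 * ε ^ 2 / Fintype.card ι) := by
    rw [hμ]
    refine (measureReal_abs_sum_sub_integral_ge_le_pi _ (X := X) (fun i ↦ measurable_of_finite _)
      (a := 0) (b := 1) (fun i b ↦ ?_) hε).trans_eq (by norm_num)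
    unfold X
    split_ifs <;> simp
  have hcompl : μ.real {y | |S y - ∫ y', S y' ∂μ| ≤ ε}ᶜ ≤
      μ.real {y | ε ≤ |S y - ∫ y', S y' ∂μ|} :=
    measureReal_mono fun _ hy ↦ (not_le.1 (Set.notMem_ofPred_iff.1 hy)).le
  linarith [measureReal_add_measureReal_compl (μ := μ)
    (s := {y | |S y - ∫ y', S y' ∂μ| ≤ ε}) .of_discrete, probReal_univ (μ := μ)]

lemma Matrix.mulVecLin_surjective_of_rank_eq {K : Type*} [Field K] {m n : ℕ}
    (H : Matrix (Fin m) (Fin n) K) (hrank : H.rank = m) : Function.Surjective H.mulVecLin := by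
  rw [← LinearMap.range_eq_top]
  apply Submodule.eq_top_of_finrank_eq
  rw [Module.finrank_fin_fun]
  exact hrank

theorem gibbs_concentration_general {m n : ℕ} (H : Matrix (Fin m) (Fin n) (ZMod 2))
    (hrank : H.rank = m) (β ω : ℝ) (hω : 0 < ω) :
    let Z : ℝ := ∑ x : Fin n → ZMod 2, Real.exp (-β * (hammingNorm (H.mulVec x) : ℝ))
    let pG : (Fin n → ZMod 2) → ℝ := fun x =>
      Real.exp (-β * (hammingNorm (H.mulVec x) : ℝ)) / Z
    let Eavg : ℝ := ∑ x : Fin n → ZMod 2, pG x * (hammingNorm (H.mulVec x) : ℝ)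
    1 - 2 * Real.exp (-(ω ^ 2 * (n : ℝ) ^ 2) / (2 * m)) ≤
      ∑ x ∈ Finset.univ.filter
          (fun x : Fin n → ZMod 2 => |(hammingNorm (H.mulVec x) : ℝ) - Eavg| ≤ ω * n),
        pG x := by
  intro Z pG Eavg
  set E : (Fin m → ZMod 2) → ℝ := fun y ↦ hammingNorm y
  set μ := gibbsMeasure β E
  have hmap : (gibbsMeasure β (E ∘ H.mulVecLin)).map H.mulVecLin = μ :=
    map_gibbsMeasure_comp_of_surjective β E H.mulVecLin.toAddMonoidHom
      (H.mulVecLin_surjective_of_rank_eq hrank)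
  have hEavg : Eavg = ∫ y, E y ∂μ := by
    rw [← hmap, integral_map (measurable_of_finite _).aemeasurable .of_discrete,
      integral_gibbsMeasure]
    rfl
  have hshell : ∑ x ∈ univ.filter (fun x ↦ |(hammingNorm (H.mulVec x) : ℝ) - Eavg| ≤ ω * n), pG x =
      μ.real {y | |E y - ∫ y, E y ∂μ| ≤ ω * n} := by
    rw [show pG = gibbsWeight β (E ∘ H.mulVecLin) from rfl, ← measureReal_gibbsMeasure, hEavg,
      ← hmap, map_measureReal_apply (measurable_of_finite _) .of_discrete]
    congr 1
    ext x
    simp [E]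
  have hexponent : -2 * (ω * n) ^ 2 / m ≤ -(ω ^ 2 * n ^ 2) / (2 * m) := by
    have hnonpos : -(ω ^ 2 * n ^ 2) / (2 * m) ≤ 0 :=
      div_nonpos_of_nonpos_of_nonneg (neg_nonpos.2 (by positivity)) (by positivity)
    linarith [show -2 * (ω * n) ^ 2 / m = 4 * (-(ω ^ 2 * n ^ 2) / (2 * m)) by ring]
  rw [hshell]
  refine le_trans ?_ (one_sub_le_measureReal_abs_hammingNorm_sub_integral_le (ι := Fin m)
    (α := fun _ ↦ ZMod 2) β (by positivity : 0 ≤ ω * n))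
  rw [Fintype.card_fin]
  gcongr 1 - 2 * exp ?_

/-- for `H ∈ F₂^{m×n}` of rank `m` and `β, ω > 0`, the Gibbs
weight of the microcanonical shell `Ξ_ω(β) = {x : ||Hx| − ⟨E⟩_β| ≤ ωn}`
satisfies `p_G(Ξ_ω(β)) ≥ 1 − 2·exp(−ω²n²/(2m))`. -/
theorem gibbs_concentration {m n : ℕ} (H : Matrix (Fin m) (Fin n) (ZMod 2))
    (hrank : H.rank = m) (β ω : ℝ) (hβ : 0 < β) (hω : 0 < ω) :
    let Z : ℝ := ∑ x : Fin n → ZMod 2, Real.exp (-β * (hammingNorm (H.mulVec x) : ℝ))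
    let pG : (Fin n → ZMod 2) → ℝ := fun x =>
      Real.exp (-β * (hammingNorm (H.mulVec x) : ℝ)) / Z
    let Eavg : ℝ := ∑ x : Fin n → ZMod 2, pG x * (hammingNorm (H.mulVec x) : ℝ)
    1 - 2 * Real.exp (-(ω ^ 2 * (n : ℝ) ^ 2) / (2 * m)) ≤
      ∑ x ∈ Finset.univ.filter
          (fun x : Fin n → ZMod 2 => |(hammingNorm (H.mulVec x) : ℝ) - Eavg| ≤ ω * n),
        pG x :=
  gibbs_concentration_general H hrank β ω hω
end

section
/- Let H ∈ F₂^{m×n} have rank m over F₂, let β > 0 and ω > 0, and let {Ω_j}_{j∈J} be a finite partition of F₂ⁿ into pairwise disjoint subsets. Call Ω_j atypical if p_G(Ω_j ∩ Ξ_ω(β)) < (1/2)·p_G(Ω_j). Then the total Gibbs weight of all atypical parts satisfies Σ_{atypical j} p_G(Ω_j) ≤ 4·exp(−ω²n²/(2m)). -/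
/-!
Since `H` has full row rank, `x ↦ H x` is onto and all its fibres have the size of its kernel,
so under the Gibbs measure the syndrome `H x` is distributed as the product measure on `F₂ᵐ` whose
coordinates are Bernoulli with parameter `q = e^{-β} / (1 + e^{-β})`. Hence `⟨E⟩_β = m q`, and by
Hoeffding's lemma the centred energy has moment generating function at most `e^{m λ² / 2}`;
Chernoff's bound then gives `p_G(Ξᶜ) ≤ 2 e^{-ω² n² / (2 m)}`. An atypical part carries more than
half of its weight outside `Ξ`, and the parts are disjoint, so together they weigh at most
`2 p_G(Ξᶜ)`.
-/

open Finset Function Real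

theorem AddMonoidHom.sum_comp_of_surjective {G G' M : Type*} [AddGroup G] [AddGroup G']
    [Fintype G] [Fintype G'] [AddCommMonoid M]
    {f : G →+ G'} (hf : Surjective f) (g : G' → M) :
    ∑ x, g (f x) = Nat.card f.ker • ∑ y, g y := by
  classical
  rw [Finset.sum_comp, Finset.image_univ_of_surjective hf, Finset.smul_sum]
  refine Finset.sum_congr rfl fun y _ => ?_
  congr 1
  rw [← Nat.card_congr (f.fiberEquivKerOfSurjective hf y), Nat.card_eq_fintype_card,
    Fintype.card_ofFinset]
  simp

theorem Matrix.mulVec_surjective_of_rank_eq {K : Type*} [Field K] {m n : ℕ}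
    {H : Matrix (Fin m) (Fin n) K} (hrank : H.rank = m) : Surjective H.mulVec := by
  have : LinearMap.range H.mulVecLin = ⊤ :=
    Submodule.eq_top_of_finrank_eq (by rw [← Matrix.rank, hrank, Module.finrank_fin_fun])
  exact LinearMap.range_eq_top.mp this

section Gibbs

variable {α : Type*} [Fintype α]

noncomputable def gibbsProb (β : ℝ) (E : α → ℝ) (x : α) : ℝ :=
  exp (-β * E x) / ∑ y, exp (-β * E y)

noncomputable def gibbsMean (β : ℝ) (E : α → ℝ) : ℝ :=
  ∑ x, gibbsProb β E x * E x

theorem gibbsProb_nonneg (β : ℝ) (E : α → ℝ) (x : α) : 0 ≤ gibbsProb β E x := by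
  unfold gibbsProb
  positivity

variable {G G' : Type*} [AddGroup G] [AddGroup G'] [Fintype G] [Fintype G'] {f : G →+ G'}

theorem gibbsProb_comp (hf : Surjective f) (β : ℝ) (E : G' → ℝ) (x : G) :
    gibbsProb β (E ∘ f) x = gibbsProb β E (f x) / Nat.card f.ker := by
  simp only [gibbsProb, Function.comp_apply]
  rw [f.sum_comp_of_surjective hf fun y => exp (-β * E y), nsmul_eq_mul, div_mul_eq_div_div_swap]

theorem sum_gibbsProb_comp_mul (hf : Surjective f) (β : ℝ) (E g : G' → ℝ) :
    ∑ x, gibbsProb β (E ∘ f) x * g (f x) = ∑ y, gibbsProb β E y * g y := by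
  have hker : (Nat.card f.ker : ℝ) ≠ 0 := Nat.cast_ne_zero.mpr Nat.card_pos.ne'
  simp_rw [gibbsProb_comp hf, div_mul_eq_mul_div, ← sum_div]
  rw [f.sum_comp_of_surjective hf fun y => gibbsProb β E y * g y, nsmul_eq_mul,
    mul_div_cancel_left₀ _ hker]

end Gibbs

theorem bernoulli_mgf_le {q : ℝ} (hq₀ : 0 ≤ q) (hq₁ : q ≤ 1) (l : ℝ) :
    (1 - q) * exp (-(l * q)) + q * exp (l * (1 - q)) ≤ exp (l ^ 2 / 2) := by
  have chord : ∀ x ∈ Set.Icc (-1 : ℝ) 1,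
      exp (l * x) ≤ (1 + x) / 2 * exp l + (1 - x) / 2 * exp (-l) := by
    rintro x ⟨hx₁, hx₂⟩
    have := convexOn_exp.2 (Set.mem_univ l) (Set.mem_univ (-l)) (by linarith : 0 ≤ (1 + x) / 2)
      (by linarith : 0 ≤ (1 - x) / 2) (by ring)
    rwa [smul_eq_mul, smul_eq_mul, smul_eq_mul, smul_eq_mul,
      show (1 + x) / 2 * l + (1 - x) / 2 * -l = l * x by ring] at this
  have h₀ := chord (-q) ⟨by linarith, by linarith⟩
  rw [mul_neg] at h₀
  have h₁ := chord (1 - q) ⟨by linarith, by linarith⟩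
  calc (1 - q) * exp (-(l * q)) + q * exp (l * (1 - q))
      ≤ (1 - q) * ((1 + -q) / 2 * exp l + (1 - -q) / 2 * exp (-l))
        + q * ((1 + (1 - q)) / 2 * exp l + (1 - (1 - q)) / 2 * exp (-l)) := by
        gcongr
    _ = cosh l := by rw [cosh_eq]; ring
    _ ≤ exp (l ^ 2 / 2) := cosh_le_exp_half_sq l

section Hamming

variable {ι : Type*} [Fintype ι] [DecidableEq ι]

theorem sum_exp_mul_hammingNorm (s : ℝ) :
    ∑ y : ι → ZMod 2, exp (s * hammingNorm y) = (1 + exp s) ^ Fintype.card ι := by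
  have hprod : ∀ y : ι → ZMod 2, exp (s * hammingNorm y) = ∏ i, if y i = 0 then 1 else exp s := by
    intro y
    rw [Finset.prod_ite, prod_const_one, prod_const, one_mul, mul_comm, exp_nat_mul]
    rfl
  have hcoord : ∑ a : ZMod 2, (if a = 0 then 1 else exp s) = 1 + exp s := Fin.sum_univ_two _
  simp_rw [hprod]
  rw [← Fintype.prod_sum fun _ a => if a = 0 then 1 else exp s, hcoord, prod_const, card_univ]

theorem sum_hammingNorm_mul_exp_mul_hammingNorm (s : ℝ) :
    ∑ y : ι → ZMod 2, hammingNorm y * exp (s * hammingNorm y)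
      = Fintype.card ι * (exp s / (1 + exp s)) * (1 + exp s) ^ Fintype.card ι := by
  -- differentiate `sum_exp_mul_hammingNorm` in `s`
  have hsum : HasDerivAt (fun s => ∑ y : ι → ZMod 2, exp (s * hammingNorm y))
      (∑ y : ι → ZMod 2, exp (s * hammingNorm y) * hammingNorm y) s :=
    HasDerivAt.fun_sum fun y _ => (hasDerivAt_mul_const _).exp
  have hpow : HasDerivAt (fun s => (1 + exp s) ^ Fintype.card ι)
      (Fintype.card ι * (1 + exp s) ^ (Fintype.card ι - 1) * exp s) s :=
    ((hasDerivAt_exp s).const_add 1).pow _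
  simp_rw [sum_exp_mul_hammingNorm] at hsum
  simp_rw [mul_comm (hammingNorm _ : ℝ), hsum.unique hpow]
  obtain _ | N := Fintype.card ι
  · simp
  · have : 1 + exp s ≠ 0 := by positivity
    rw [Nat.add_sub_cancel, pow_succ]
    field_simp

theorem gibbsProb_hammingNorm (β : ℝ) (y : ι → ZMod 2) :
    gibbsProb β (fun y : ι → ZMod 2 => (hammingNorm y : ℝ)) y
      = exp (-β * hammingNorm y) / (1 + exp (-β)) ^ Fintype.card ι := by
  rw [gibbsProb, sum_exp_mul_hammingNorm]

theorem gibbsMean_hammingNorm (β : ℝ) :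
    gibbsMean β (fun y : ι → ZMod 2 => (hammingNorm y : ℝ))
      = Fintype.card ι * (exp (-β) / (1 + exp (-β))) := by
  have hpos : (1 + exp (-β)) ^ Fintype.card ι ≠ 0 := by positivity
  simp_rw [gibbsMean, gibbsProb_hammingNorm, div_mul_eq_mul_div, ← sum_div, mul_comm (exp _),
    sum_hammingNorm_mul_exp_mul_hammingNorm, mul_div_cancel_right₀ _ hpos]

theorem sum_gibbsProb_hammingNorm_mul_exp_le (β l : ℝ) :
    ∑ y : ι → ZMod 2, gibbsProb β (fun y : ι → ZMod 2 => (hammingNorm y : ℝ)) y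
        * exp (l * (hammingNorm y - Fintype.card ι * (exp (-β) / (1 + exp (-β)))))
      ≤ exp (Fintype.card ι * l ^ 2 / 2) := by
  set q := exp (-β) / (1 + exp (-β))
  have hq₀ : 0 ≤ q := by positivity
  have hq₁ : q ≤ 1 := div_le_one_of_le₀ (by linarith) (by positivity)
  have hterm : ∀ y : ι → ZMod 2, gibbsProb β (fun y : ι → ZMod 2 => (hammingNorm y : ℝ)) y
        * exp (l * (hammingNorm y - Fintype.card ι * q))
      = exp ((l - β) * hammingNorm y)
        * (exp (-(l * q)) ^ Fintype.card ι / (1 + exp (-β)) ^ Fintype.card ι) := by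
    intro y
    rw [gibbsProb_hammingNorm, ← exp_nat_mul]
    field_simp
    rw [← exp_add, ← exp_add]
    ring_nf
  have hcoord : exp (-(l * q)) * ((1 + exp (l - β)) / (1 + exp (-β)))
      = (1 - q) * exp (-(l * q)) + q * exp (l * (1 - q)) := by
    have hexp : exp (l * (1 - q)) = exp l * exp (-(l * q)) := by rw [← exp_add]; ring_nf
    rw [hexp, sub_eq_add_neg l β, exp_add]
    simp only [q]
    field_simp
    ring
  calc ∑ y : ι → ZMod 2, gibbsProb β (fun y : ι → ZMod 2 => (hammingNorm y : ℝ)) y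
        * exp (l * (hammingNorm y - Fintype.card ι * q))
      = (exp (-(l * q)) * ((1 + exp (l - β)) / (1 + exp (-β)))) ^ Fintype.card ι := by
        rw [sum_congr rfl fun y _ => hterm y, ← sum_mul, sum_exp_mul_hammingNorm, mul_pow, div_pow]
        ring
    _ ≤ exp (l ^ 2 / 2) ^ Fintype.card ι := by
        rw [hcoord]
        exact pow_le_pow_left₀ (by positivity) (bernoulli_mgf_le hq₀ hq₁ l) _
    _ = exp (Fintype.card ι * l ^ 2 / 2) := by rw [← exp_nat_mul, mul_div_assoc]

end Hamming

section Chernoff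

variable {α : Type*} [Fintype α] {p X : α → ℝ} {K t : ℝ}

theorem sum_filter_lt_le_of_mgf_le (hp : ∀ a, 0 ≤ p a) (hK : 0 ≤ K) (ht : 0 ≤ t)
    (hmgf : ∀ l, ∑ a, p a * exp (l * X a) ≤ exp (K * l ^ 2 / 2)) :
    ∑ a ∈ univ.filter (fun a => t < X a), p a ≤ exp (-t ^ 2 / (2 * K)) := by
  set l := t / K
  have hl : 0 ≤ l := by positivity
  have hmarkov : ∀ a ∈ univ.filter (fun a => t < X a),
      p a ≤ p a * exp (l * X a) * exp (-(l * t)) := by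
    intro a ha
    have hXa := (mem_filter.mp ha).2
    rw [mul_assoc, ← exp_add]
    exact le_mul_of_one_le_right (hp a) (one_le_exp (by nlinarith))
  -- for `K = 0` both sides vanish, as `t / 0 = 0` and `-t ^ 2 / 0 = 0`
  have hexponent : K * l ^ 2 / 2 + -(l * t) = -t ^ 2 / (2 * K) := by
    rcases eq_or_ne K 0 with rfl | hK0
    · simp [l]
    · simp only [l]
      field_simp
      ring
  calc ∑ a ∈ univ.filter (fun a => t < X a), p a
      ≤ ∑ a ∈ univ.filter (fun a => t < X a), p a * exp (l * X a) * exp (-(l * t)) :=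
        sum_le_sum hmarkov
    _ ≤ ∑ a, p a * exp (l * X a) * exp (-(l * t)) :=
        sum_le_sum_of_subset_of_nonneg (subset_univ _) fun a _ _ => by
          have := hp a
          positivity
    _ = (∑ a, p a * exp (l * X a)) * exp (-(l * t)) := by rw [sum_mul]
    _ ≤ exp (K * l ^ 2 / 2) * exp (-(l * t)) := by gcongr; exact hmgf l
    _ = exp (-t ^ 2 / (2 * K)) := by rw [← exp_add, hexponent]

theorem sum_filter_lt_abs_le_of_mgf_le (hp : ∀ a, 0 ≤ p a) (hK : 0 ≤ K) (ht : 0 ≤ t)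
    (hmgf : ∀ l, ∑ a, p a * exp (l * X a) ≤ exp (K * l ^ 2 / 2)) :
    ∑ a ∈ univ.filter (fun a => t < |X a|), p a ≤ 2 * exp (-t ^ 2 / (2 * K)) := by
  classical
  have hsplit : univ.filter (fun a => t < |X a|)
      = univ.filter (fun a => t < X a) ∪ univ.filter (fun a => t < -X a) := by
    simp_rw [lt_abs, filter_or]
  have hdisj : Disjoint (univ.filter (fun a => t < X a)) (univ.filter (fun a => t < -X a)) :=
    disjoint_filter.mpr fun a _ h₁ h₂ => by linarith
  have hmgf_neg : ∀ l, ∑ a, p a * exp (l * -X a) ≤ exp (K * l ^ 2 / 2) := fun l => by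
    simpa [mul_neg, neg_mul] using hmgf (-l)
  rw [hsplit, sum_union hdisj, two_mul]
  exact add_le_add (sum_filter_lt_le_of_mgf_le hp hK ht hmgf)
    (sum_filter_lt_le_of_mgf_le hp hK ht hmgf_neg)

end Chernoff

theorem sum_gibbsProb_filter_lt_abs_sub_gibbsMean_le {ι G : Type*} [Fintype ι] [DecidableEq ι]
    [AddGroup G] [Fintype G] {f : G →+ (ι → ZMod 2)} (hf : Surjective f) (β : ℝ)
    {t : ℝ} (ht : 0 ≤ t) :
    ∑ x ∈ univ.filter (fun x => t < |(hammingNorm (f x) : ℝ)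
        - gibbsMean β (fun x => (hammingNorm (f x) : ℝ))|),
      gibbsProb β (fun x => (hammingNorm (f x) : ℝ)) x
      ≤ 2 * exp (-t ^ 2 / (2 * Fintype.card ι)) := by
  set E : (ι → ZMod 2) → ℝ := fun y => hammingNorm y
  set μ := Fintype.card ι * (exp (-β) / (1 + exp (-β)))
  have hmean : gibbsMean β (E ∘ f) = μ :=
    (sum_gibbsProb_comp_mul hf β E E).trans (gibbsMean_hammingNorm β)
  have hpush : ∑ x ∈ univ.filter (fun x => t < |E (f x) - μ|), gibbsProb β (E ∘ f) x
      = ∑ y ∈ univ.filter (fun y => t < |E y - μ|), gibbsProb β E y := by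
    simpa only [sum_filter, mul_boole]
      using sum_gibbsProb_comp_mul hf β E fun y => if t < |E y - μ| then 1 else 0
  change ∑ x ∈ univ.filter (fun x => t < |E (f x) - gibbsMean β (E ∘ f)|), gibbsProb β (E ∘ f) x
    ≤ _
  rw [hmean, hpush]
  exact sum_filter_lt_abs_le_of_mgf_le (gibbsProb_nonneg β E) (Nat.cast_nonneg _) ht
    (sum_gibbsProb_hammingNorm_mul_exp_le β)

theorem sum_filter_atypical_le {α J : Type*} [Fintype α] [DecidableEq α] [Fintype J]
    {p : α → ℝ} (hp : ∀ a, 0 ≤ p a) {Ω : J → Finset α} (hΩ : Pairwise (Disjoint on Ω))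
    (S : Finset α) :
    ∑ j ∈ univ.filter (fun j => ∑ a ∈ Ω j ∩ S, p a < (∑ a ∈ Ω j, p a) / 2), ∑ a ∈ Ω j, p a
      ≤ 2 * ∑ a ∈ Sᶜ, p a := by
  have hout : ∀ j, 0 ≤ ∑ a ∈ Ω j \ S, p a := fun j => sum_nonneg fun a _ => hp a
  calc ∑ j ∈ univ.filter (fun j => ∑ a ∈ Ω j ∩ S, p a < (∑ a ∈ Ω j, p a) / 2), ∑ a ∈ Ω j, p a
      ≤ ∑ j ∈ univ.filter (fun j => ∑ a ∈ Ω j ∩ S, p a < (∑ a ∈ Ω j, p a) / 2),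
          2 * ∑ a ∈ Ω j \ S, p a := by
        refine sum_le_sum fun j hj => ?_
        have hatyp := (mem_filter.mp hj).2
        have := sum_inter_add_sum_sdiff (Ω j) S p
        linarith
    _ ≤ ∑ j, 2 * ∑ a ∈ Ω j \ S, p a :=
        sum_le_sum_of_subset_of_nonneg (filter_subset _ _) fun j _ _ => by linarith [hout j]
    _ = 2 * ∑ a ∈ univ.biUnion (fun j => Ω j \ S), p a := by
        rw [← mul_sum, sum_biUnion]
        exact (hΩ.mono fun j k h => h.mono sdiff_subset sdiff_subset).set_pairwise _
    _ ≤ 2 * ∑ a ∈ Sᶜ, p a := by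
        gcongr 2 * ?_
        refine sum_le_sum_of_subset_of_nonneg (fun a ha => ?_) fun a _ _ => hp a
        obtain ⟨j, -, ha⟩ := mem_biUnion.mp ha
        exact mem_compl.mpr (mem_sdiff.mp ha).2

theorem atypical_parts_small_weight_general {m n : ℕ} (H : Matrix (Fin m) (Fin n) (ZMod 2))
    (hrank : H.rank = m) (β ω : ℝ) (hω : 0 < ω)
    {J : Type*} [Fintype J] (Ω : J → Finset (Fin n → ZMod 2))
    (hdisj : ∀ j k : J, j ≠ k → Disjoint (Ω j) (Ω k)) :
    let Z : ℝ := ∑ x : Fin n → ZMod 2, Real.exp (-β * (hammingNorm (H.mulVec x) : ℝ))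
    let pG : (Fin n → ZMod 2) → ℝ := fun x =>
      Real.exp (-β * (hammingNorm (H.mulVec x) : ℝ)) / Z
    let Eavg : ℝ := ∑ x : Fin n → ZMod 2, pG x * (hammingNorm (H.mulVec x) : ℝ)
    let Ξ : Finset (Fin n → ZMod 2) := Finset.univ.filter
      (fun x : Fin n → ZMod 2 => |(hammingNorm (H.mulVec x) : ℝ) - Eavg| ≤ ω * n)
    ∑ j ∈ Finset.univ.filter
        (fun j : J => ∑ x ∈ Ω j ∩ Ξ, pG x < (∑ x ∈ Ω j, pG x) / 2),
      ∑ x ∈ Ω j, pG x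
    ≤ 4 * Real.exp (-(ω ^ 2 * (n : ℝ) ^ 2) / (2 * m)) := by
  intro Z pG Eavg Ξ
  have hf : Surjective H.mulVecLin.toAddMonoidHom :=
    Matrix.mulVec_surjective_of_rank_eq hrank
  have htail := sum_gibbsProb_filter_lt_abs_sub_gibbsMean_le hf β (t := ω * n) (by positivity)
  have hΞ : Ξᶜ = univ.filter (fun x => ω * n < |(hammingNorm (H.mulVec x) : ℝ) - Eavg|) := by
    simp only [Ξ, compl_filter, not_le]
  calc _ ≤ 2 * ∑ x ∈ Ξᶜ, pG x :=
        sum_filter_atypical_le (gibbsProb_nonneg β _) (fun j k => hdisj j k) Ξ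
    _ ≤ 2 * (2 * exp (-(ω * n) ^ 2 / (2 * m))) := by
        rw [hΞ]
        gcongr
        rw [Fintype.card_fin] at htail
        exact htail
    _ = 4 * Real.exp (-(ω ^ 2 * (n : ℝ) ^ 2) / (2 * m)) := by rw [mul_pow]; ring

/-- for `H ∈ F₂^{m×n}` of rank `m`, `β, ω > 0`, and a finite
partition `{Ω_j}` of `F₂ⁿ` into pairwise disjoint subsets, the total Gibbs
weight of all atypical parts — those with
`p_G(Ω_j ∩ Ξ_ω(β)) < p_G(Ω_j)/2` — is at most `4·exp(−ω²n²/(2m))`. -/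
theorem atypical_parts_small_weight {m n : ℕ} (H : Matrix (Fin m) (Fin n) (ZMod 2))
    (hrank : H.rank = m) (β ω : ℝ) (hβ : 0 < β) (hω : 0 < ω)
    {J : Type*} [Fintype J] (Ω : J → Finset (Fin n → ZMod 2))
    (hdisj : ∀ j k : J, j ≠ k → Disjoint (Ω j) (Ω k))
    (hcover : ∀ x : Fin n → ZMod 2, ∃ j : J, x ∈ Ω j) :
    let Z : ℝ := ∑ x : Fin n → ZMod 2, Real.exp (-β * (hammingNorm (H.mulVec x) : ℝ))
    let pG : (Fin n → ZMod 2) → ℝ := fun x =>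
      Real.exp (-β * (hammingNorm (H.mulVec x) : ℝ)) / Z
    let Eavg : ℝ := ∑ x : Fin n → ZMod 2, pG x * (hammingNorm (H.mulVec x) : ℝ)
    let Ξ : Finset (Fin n → ZMod 2) := Finset.univ.filter
      (fun x : Fin n → ZMod 2 => |(hammingNorm (H.mulVec x) : ℝ) - Eavg| ≤ ω * n)
    ∑ j ∈ Finset.univ.filter
        (fun j : J => ∑ x ∈ Ω j ∩ Ξ, pG x < (∑ x ∈ Ω j, pG x) / 2),
      ∑ x ∈ Ω j, pG x
    ≤ 4 * Real.exp (-(ω ^ 2 * (n : ℝ) ^ 2) / (2 * m)) :=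
  atypical_parts_small_weight_general H hrank β ω hω Ω hdisj
end

section
/- Let H ∈ F₂^{m×n} be (δ,γ)-expanding, let x₀ ∈ F₂ⁿ with |Hx₀| = ε_x·n, and let ε satisfy ε_x < ε < γδ/2. Let Ω = {y ∈ F₂ⁿ : |y ⊕ x₀| ≤ (2ε/γ)·n} be the Hamming ball of radius 2nε/γ around x₀, and let 0 < η < δ − 2ε/γ. Then every u in the η-boundary ∂_η Ω has energy |Hu| ≥ 2εn − ε_x n, and consequently the free-energy bottleneck ratio satisfies (Σ_{u ∈ ∂_η Ω} e^{−β|Hu|}) / (Σ_{w ∈ Ω} e^{−β|Hw|}) ≤ 2ⁿ · exp(−βn(ε − ε_x)) for every β > 0. -/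
/-!
A boundary point `u` lies outside the ball `Ω` of radius `2εn/γ` around `x₀`, yet within
`ηn + 2εn/γ ≤ δn` of `x₀`, so expansion applies to `u + x₀`: `2εn < γ|u + x₀| ≤ |Hu| + |Hx₀|`.
For the ratio, the numerator has at most `2ⁿ` terms, each at most `exp(−β(2εn − ε_x n))`, and
the denominator contains the term `exp(−β ε_x n)` of `x₀ ∈ Ω`.
-/

open Finset

theorem hammingNorm_add_le {ι : Type*} [Fintype ι] {β : ι → Type*} [∀ i, AddZeroClass (β i)]
    [∀ i, DecidableEq (β i)] (f g : ∀ i, β i) :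
    hammingNorm (f + g) ≤ hammingNorm f + hammingNorm g := by
  classical
  unfold hammingNorm
  refine (card_le_card fun i hi => ?_).trans (card_union_le _ _)
  simp only [mem_filter, mem_univ, true_and, mem_union] at hi ⊢
  by_contra! h
  exact hi (by simp [Pi.add_apply, h.1, h.2])

theorem CharTwo.pi_add_add_add_cancel {ι R : Type*} [Semiring R] [CharP R 2] (u y x : ι → R) :
    (u + y) + (y + x) = u + x := by
  funext i
  simp only [Pi.add_apply, ← add_assoc, CharTwo.add_cancel_right]

theorem CharTwo.pi_add_self {ι R : Type*} [Semiring R] [CharP R 2] (x : ι → R) : x + x = 0 :=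
  funext fun i => CharTwo.add_self_eq_zero (x i)

section Expanding

variable {m n : ℕ} {H : Matrix (Fin m) (Fin n) (ZMod 2)} {δ γ : ℝ}

theorem IsExpanding.mul_hammingNorm_add_le (hexp : IsExpanding H δ γ) {u x : Fin n → ZMod 2}
    (hux : (hammingNorm (u + x) : ℝ) ≤ δ * n) :
    γ * hammingNorm (u + x) ≤ hammingNorm (H.mulVec u) + hammingNorm (H.mulVec x) := by
  calc γ * hammingNorm (u + x) ≤ hammingNorm (H.mulVec (u + x)) := hexp _ hux
    _ ≤ hammingNorm (H.mulVec u) + hammingNorm (H.mulVec x) := by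
      rw [Matrix.mulVec_add]; exact_mod_cast hammingNorm_add_le _ _

theorem IsExpanding.mul_sub_le_hammingNorm_mulVec_of_near_ball (hexp : IsExpanding H δ γ)
    (hγ : 0 ≤ γ) {x u y : Fin n → ZMod 2} {r η : ℝ} (hr : η * n + r ≤ δ * n)
    (hu : r < hammingNorm (u + x)) (hy : (hammingNorm (y + x) : ℝ) ≤ r)
    (huy : (hammingNorm (u + y) : ℝ) ≤ η * n) :
    γ * r - hammingNorm (H.mulVec x) ≤ hammingNorm (H.mulVec u) := by
  have hux : (hammingNorm (u + x) : ℝ) ≤ hammingNorm (u + y) + hammingNorm (y + x) := by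
    rw [← CharTwo.pi_add_add_add_cancel u y x]; exact_mod_cast hammingNorm_add_le _ _
  have := hexp.mul_hammingNorm_add_le (u := u) (x := x) (by linarith)
  nlinarith

end Expanding

theorem sum_exp_div_sum_exp_le {α : Type*} {B Ω : Finset α} (E : α → ℝ) {β a : ℝ} (hβ : 0 ≤ β)
    (hB : ∀ u ∈ B, a ≤ E u) {x : α} (hx : x ∈ Ω) :
    (∑ u ∈ B, Real.exp (-β * E u)) / (∑ w ∈ Ω, Real.exp (-β * E w))
      ≤ #B * Real.exp (-β * (a - E x)) := by
  have hden : Real.exp (-β * E x) ≤ ∑ w ∈ Ω, Real.exp (-β * E w) :=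
    single_le_sum (f := fun w => Real.exp (-β * E w)) (fun _ _ => (Real.exp_pos _).le) hx
  have hnum : ∑ u ∈ B, Real.exp (-β * E u) ≤ #B * Real.exp (-β * a) := by
    rw [← nsmul_eq_mul, ← sum_const]
    exact sum_le_sum fun u hu => Real.exp_le_exp.2 (by nlinarith [hB u hu])
  rw [div_le_iff₀ ((Real.exp_pos _).trans_le hden)]
  calc ∑ u ∈ B, Real.exp (-β * E u) ≤ #B * Real.exp (-β * a) := hnum
    _ = #B * Real.exp (-β * (a - E x)) * Real.exp (-β * E x) := by
      rw [mul_assoc, ← Real.exp_add]; ring_nf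
    _ ≤ #B * Real.exp (-β * (a - E x)) * ∑ w ∈ Ω, Real.exp (-β * E w) := by gcongr

theorem low_energy_bottleneck_general {m n : ℕ} (H : Matrix (Fin m) (Fin n) (ZMod 2))
    (δ γ εx ε η β : ℝ) (hγ : 0 < γ) (hexp : IsExpanding H δ γ)
    (x₀ : Fin n → ZMod 2) (hx₀ : (hammingNorm (H.mulVec x₀) : ℝ) = εx * n)
    (hεx : εx < ε)
    (hη : η < δ - 2 * ε / γ) (hβ : 0 < β) :
    let Ω : Finset (Fin n → ZMod 2) := Finset.univ.filter
      (fun y : Fin n → ZMod 2 => (hammingNorm (y + x₀) : ℝ) ≤ 2 * ε / γ * n)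
    let bd : Finset (Fin n → ZMod 2) := Finset.univ.filter
      (fun u : Fin n → ZMod 2 => u ∉ Ω ∧ ∃ y ∈ Ω, (hammingNorm (u + y) : ℝ) ≤ η * n)
    (∀ u ∈ bd, 2 * ε * n - εx * n ≤ (hammingNorm (H.mulVec u) : ℝ)) ∧
    (∑ u ∈ bd, Real.exp (-β * (hammingNorm (H.mulVec u) : ℝ))) /
        (∑ w ∈ Ω, Real.exp (-β * (hammingNorm (H.mulVec w) : ℝ)))
      ≤ 2 ^ n * Real.exp (-β * n * (ε - εx)) := by
  intro Ω bd
  have hn : (0 : ℝ) ≤ n := n.cast_nonneg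
  have hεxn : 0 ≤ εx * n := hx₀ ▸ Nat.cast_nonneg _
  have henergy : ∀ u ∈ bd, 2 * ε * n - εx * n ≤ (hammingNorm (H.mulVec u) : ℝ) := by
    intro u hu
    simp only [bd, Ω, mem_filter, mem_univ, true_and, not_le] at hu
    obtain ⟨hu, y, hy, huy⟩ := hu
    have hradius : η * n + 2 * ε / γ * n ≤ δ * n := by nlinarith
    have hγε : γ * (2 * ε / γ * n) = 2 * ε * n := by field_simp
    have := hexp.mul_sub_le_hammingNorm_mulVec_of_near_ball hγ.le hradius hu hy huy
    rwa [hγε, hx₀] at this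
  refine ⟨henergy, ?_⟩
  have hx₀Ω : x₀ ∈ Ω := by
    simp only [Ω, mem_filter, mem_univ, true_and]
    rw [CharTwo.pi_add_self, hammingNorm_zero, Nat.cast_zero]
    have hεn : 0 ≤ ε * n := by nlinarith
    rw [div_mul_eq_mul_div, mul_assoc]
    positivity
  have hcard : (#bd : ℝ) ≤ 2 ^ n := by
    exact_mod_cast (card_le_univ bd).trans_eq (by simp)
  refine (sum_exp_div_sum_exp_le _ hβ.le henergy hx₀Ω).trans ?_
  rw [hx₀]
  refine mul_le_mul hcard (Real.exp_le_exp.2 ?_) (Real.exp_pos _).le (by positivity)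
  nlinarith [mul_nonneg hβ.le (mul_nonneg hn (sub_nonneg.2 hεx.le))]

/-- for a `(δ,γ)`-expanding `H`, a state `x₀` with `|Hx₀| = ε_x n`
and `ε_x < ε < γδ/2`, let `Ω` be the Hamming ball of radius `2nε/γ` around `x₀`
and let `0 < η < δ − 2ε/γ`. Then every `u` in the η-boundary `∂_η Ω` has energy
`|Hu| ≥ 2εn − ε_x n`, and the bottleneck ratio satisfies
`pG(∂_η Ω)/pG(Ω) ≤ 2ⁿ · exp(−βn(ε − ε_x))` for every `β > 0`. -/
theorem low_energy_bottleneck {m n : ℕ} (H : Matrix (Fin m) (Fin n) (ZMod 2))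
    (δ γ εx ε η β : ℝ) (hδ : 0 < δ) (hγ : 0 < γ) (hexp : IsExpanding H δ γ)
    (x₀ : Fin n → ZMod 2) (hx₀ : (hammingNorm (H.mulVec x₀) : ℝ) = εx * n)
    (hεx : εx < ε) (hε : ε < γ * δ / 2)
    (hη0 : 0 < η) (hη : η < δ - 2 * ε / γ) (hβ : 0 < β) :
    let Ω : Finset (Fin n → ZMod 2) := Finset.univ.filter
      (fun y : Fin n → ZMod 2 => (hammingNorm (y + x₀) : ℝ) ≤ 2 * ε / γ * n)
    let bd : Finset (Fin n → ZMod 2) := Finset.univ.filter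
      (fun u : Fin n → ZMod 2 => u ∉ Ω ∧ ∃ y ∈ Ω, (hammingNorm (u + y) : ℝ) ≤ η * n)
    (∀ u ∈ bd, 2 * ε * n - εx * n ≤ (hammingNorm (H.mulVec u) : ℝ)) ∧
    (∑ u ∈ bd, Real.exp (-β * (hammingNorm (H.mulVec u) : ℝ))) /
        (∑ w ∈ Ω, Real.exp (-β * (hammingNorm (H.mulVec w) : ℝ)))
      ≤ 2 ^ n * Real.exp (-β * n * (ε - εx)) :=
  low_energy_bottleneck_general H δ γ εx ε η β hγ hexp x₀ hx₀ hεx hη hβ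
end

section
/- (Classical bottleneck theorem.) Let χ be a finite set, let M : χ × χ → [0,1] be a column-stochastic Markov kernel (Σ_{x∈χ} M(x,y) = 1 for every y ∈ χ) with stationary distribution π (i.e. Σ_y M(x,y)π(y) = π(x) for all x). Let χ = A ⊎ B₁ ⊎ B₂ ⊎ C be a partition such that M(x,y) = 0 whenever (x ∈ B₂ ∪ C and y ∈ A) or (x ∈ A ∪ B₁ and y ∈ C), and assume π(A) > 0. Define the restricted distribution π^{(A)}(x) = π(x)·1_A(x)/π(A). Then Σ_{x∈χ} | Σ_{y∈χ} M(x,y)π^{(A)}(y) − π^{(A)}(x) | ≤ 2·π(B₁ ∪ B₂)/π(A). -/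
/-!
Write `q = π·1_A`. A column-stochastic kernel preserves total mass, so the mass that `Mq` puts
outside `A` equals its deficit `Σ_{x ∈ A} (q x - (Mq) x)` on `A`, and the `ℓ¹` distance
between `Mq` and `q` is twice that deficit. By stationarity the deficit at `x ∈ A` is the
flow `Σ_{y ∉ A} M(x,y) π(y)` into `x` from outside `A`; since nothing flows from `C` into `A`,
it comes from `B₁ ∪ B₂` only, and as each column of `M` sums to one, the total deficit is at
most `π(B₁ ∪ B₂)`. Dividing by `π(A)` gives the bound.
-/

open Finset

theorem sum_abs_sub_eq_two_mul_sum_sub {ι : Type*} [Fintype ι] (s : Finset ι) {a b : ι → ℝ}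
    (hmass : ∑ i, a i = ∑ i, b i) (ha : ∀ i, 0 ≤ a i) (hab : ∀ i ∈ s, a i ≤ b i)
    (hb : ∀ i ∉ s, b i = 0) :
    ∑ i, |a i - b i| = 2 * ∑ i ∈ s, (b i - a i) := by
  classical
  have hin : ∑ i ∈ s, |a i - b i| = ∑ i ∈ s, (b i - a i) :=
    sum_congr rfl fun i hi => by rw [abs_sub_comm, abs_of_nonneg (sub_nonneg.2 (hab i hi))]
  have hout : ∑ i ∈ sᶜ, |a i - b i| = ∑ i ∈ sᶜ, a i :=
    sum_congr rfl fun i hi => by rw [hb i (mem_compl.1 hi), sub_zero, abs_of_nonneg (ha i)]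
  have hb_out : ∑ i ∈ sᶜ, b i = 0 := sum_eq_zero fun i hi => hb i (mem_compl.1 hi)
  rw [← sum_add_sum_compl s, hin, hout]
  rw [← sum_add_sum_compl s a, ← sum_add_sum_compl s b, hb_out] at hmass
  rw [sum_sub_distrib]
  linarith

section Kernel

variable {ι : Type*} [Fintype ι] {M : ι → ι → ℝ}

theorem sum_sum_mul_eq_sum_of_colStochastic (hstoch : ∀ y, ∑ x, M x y = 1) (p : ι → ℝ) :
    ∑ x, ∑ y, M x y * p y = ∑ y, p y := by
  rw [sum_comm]
  exact sum_congr rfl fun y _ => by rw [← sum_mul, hstoch, one_mul]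

variable [DecidableEq ι]

theorem sum_sub_sum_mul_restrict_le_of_stationary {A B C : Finset ι}
    (hcol : ∀ y, ∑ x ∈ A, M x y ≤ 1) {π : ι → ℝ} (hπ0 : ∀ x, 0 ≤ π x)
    (hstat : ∀ x ∈ A, ∑ y, M x y * π y = π x)
    (hcover : A ∪ B ∪ C = univ) (hblock : ∀ x ∈ A, ∀ y ∈ C, M x y = 0) :
    ∑ x ∈ A, (π x - ∑ y, M x y * (if y ∈ A then π y else 0)) ≤ ∑ y ∈ B, π y := by
  have hinflow : ∀ x ∈ A, π x - ∑ y, M x y * (if y ∈ A then π y else 0)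
      = ∑ y, M x y * (if y ∈ A then 0 else π y) := by
    intro x hx
    conv_lhs => rw [← hstat x hx]
    rw [← sum_sub_distrib]
    exact sum_congr rfl fun y _ => by split_ifs <;> ring
  calc ∑ x ∈ A, (π x - ∑ y, M x y * (if y ∈ A then π y else 0))
      = ∑ y, (∑ x ∈ A, M x y) * (if y ∈ A then 0 else π y) := by
        rw [sum_congr rfl hinflow, sum_comm]
        simp only [sum_mul]
    _ ≤ ∑ y, if y ∈ B then π y else 0 := by
        refine sum_le_sum fun y _ => ?_
        by_cases hyA : y ∈ A
        · simp only [hyA, if_true, mul_zero]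
          split_ifs <;> simp [hπ0 y]
        by_cases hyB : y ∈ B
        · simpa [hyA, hyB] using mul_le_of_le_one_left (hπ0 y) (hcol y)
        have hyC : y ∈ C := by
          have hy : y ∈ A ∪ B ∪ C := hcover ▸ mem_univ y
          simp only [mem_union] at hy
          tauto
        simp [hyA, hyB, sum_eq_zero fun x hx => hblock x hx y hyC]
    _ = ∑ y ∈ B, π y := by rw [sum_ite_mem, univ_inter]

end Kernel

theorem bottleneck_theorem_general {χ : Type*} [Fintype χ] [DecidableEq χ]
    (M : χ → χ → ℝ) (hM0 : ∀ x y, 0 ≤ M x y)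
    (hstoch : ∀ y, ∑ x, M x y = 1)
    (π : χ → ℝ) (hπ0 : ∀ x, 0 ≤ π x)
    (hstat : ∀ x, ∑ y, M x y * π y = π x)
    (A B₁ B₂ C : Finset χ)
    (hcover : A ∪ B₁ ∪ B₂ ∪ C = Finset.univ)
    (hblock₂ : ∀ x y, x ∈ A ∪ B₁ → y ∈ C → M x y = 0) :
    let πA : χ → ℝ := fun x => (if x ∈ A then π x else 0) / ∑ z ∈ A, π z
    ∑ x, |(∑ y, M x y * πA y) - πA x| ≤
      2 * (∑ x ∈ B₁ ∪ B₂, π x) / ∑ x ∈ A, π x := by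
  intro πA
  set q : χ → ℝ := fun x => if x ∈ A then π x else 0
  have hmass_nonneg : 0 ≤ ∑ x ∈ A, π x := sum_nonneg fun x _ => hπ0 x
  have hq_nonneg : ∀ y, 0 ≤ q y := fun y => by simp only [q]; split_ifs <;> simp [hπ0 y]
  have hq_le : ∀ y, q y ≤ π y := fun y => by simp only [q]; split_ifs <;> simp [hπ0 y]
  have hMq_le : ∀ x ∈ A, ∑ y, M x y * q y ≤ q x := fun x hx => by
    calc ∑ y, M x y * q y ≤ ∑ y, M x y * π y := sum_le_sum fun y _ =>
          mul_le_mul_of_nonneg_left (hq_le y) (hM0 x y)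
      _ = q x := by simp [q, hx, hstat x]
  have htv : ∑ x, |∑ y, M x y * q y - q x| = 2 * ∑ x ∈ A, (q x - ∑ y, M x y * q y) :=
    sum_abs_sub_eq_two_mul_sum_sub A (sum_sum_mul_eq_sum_of_colStochastic hstoch q)
      (fun x => sum_nonneg fun y _ => mul_nonneg (hM0 x y) (hq_nonneg y))
      hMq_le (fun x hx => if_neg hx)
  have hdeficit : ∑ x ∈ A, (q x - ∑ y, M x y * q y) ≤ ∑ x ∈ B₁ ∪ B₂, π x := by
    rw [sum_congr rfl fun x hx => by rw [show q x = π x from if_pos hx]]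
    refine sum_sub_sum_mul_restrict_le_of_stationary (fun y => ?_) hπ0 (fun x _ => hstat x)
      (by rwa [← union_assoc]) fun x hx y hy => hblock₂ x y (mem_union_left _ hx) hy
    exact hstoch y ▸ sum_le_sum_of_subset_of_nonneg (subset_univ A) fun x _ _ => hM0 x y
  have hscale : ∑ x, |(∑ y, M x y * πA y) - πA x|
      = (∑ x, |∑ y, M x y * q y - q x|) / ∑ x ∈ A, π x := by
    simp only [πA, ← mul_div_assoc, ← sum_div, ← sub_div, abs_div,
      abs_of_nonneg hmass_nonneg]
    rfl
  rw [hscale, htv]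
  exact div_le_div_of_nonneg_right (by linarith) hmass_nonneg

/-- classical bottleneck theorem: let `χ` be finite,
`M : χ × χ → [0,1]` a column-stochastic Markov kernel with stationary
distribution `π`, and `χ = A ⊎ B₁ ⊎ B₂ ⊎ C` a partition such that `M(x,y) = 0`
whenever (`x ∈ B₂ ∪ C` and `y ∈ A`) or (`x ∈ A ∪ B₁` and `y ∈ C`), and
`π(A) > 0`. Then the restriction `π^{(A)}` of `π` to `A` satisfies
`Σ_x |(Mπ^{(A)})(x) − π^{(A)}(x)| ≤ 2·π(B₁ ∪ B₂)/π(A)`. -/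
theorem bottleneck_theorem {χ : Type*} [Fintype χ] [DecidableEq χ]
    (M : χ → χ → ℝ) (hM0 : ∀ x y, 0 ≤ M x y) (hM1 : ∀ x y, M x y ≤ 1)
    (hstoch : ∀ y, ∑ x, M x y = 1)
    (π : χ → ℝ) (hπ0 : ∀ x, 0 ≤ π x) (hπ1 : ∑ x, π x = 1)
    (hstat : ∀ x, ∑ y, M x y * π y = π x)
    (A B₁ B₂ C : Finset χ)
    (hAB₁ : Disjoint A B₁) (hAB₂ : Disjoint A B₂) (hAC : Disjoint A C)
    (hB₁B₂ : Disjoint B₁ B₂) (hB₁C : Disjoint B₁ C) (hB₂C : Disjoint B₂ C)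
    (hcover : A ∪ B₁ ∪ B₂ ∪ C = Finset.univ)
    (hblock₁ : ∀ x y, x ∈ B₂ ∪ C → y ∈ A → M x y = 0)
    (hblock₂ : ∀ x y, x ∈ A ∪ B₁ → y ∈ C → M x y = 0)
    (hA : 0 < ∑ x ∈ A, π x) :
    let πA : χ → ℝ := fun x => (if x ∈ A then π x else 0) / ∑ z ∈ A, π z
    ∑ x, |(∑ y, M x y * πA y) - πA x| ≤
      2 * (∑ x ∈ B₁ ∪ B₂, π x) / ∑ x ∈ A, π x :=
  bottleneck_theorem_general M hM0 hstoch π hπ0 hstat A B₁ B₂ C hcover hblock₂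
end

section
/- Let 0 < y < 1 and define f(m) = 4m³(1−y) / (1 + 7y + 3m⁴(1−y)) for m ∈ ℝ (the denominator is strictly positive). If y > 1/25, then m = 0 is the unique real solution of f(m) = m. If 0 < y ≤ 1/25, then the set of real solutions of f(m) = m is exactly {0, √((2+s)/3), −√((2+s)/3), √((2−s)/3), −√((2−s)/3)}, where s = √((1−25y)/(1−y)). In particular, for y = 1/25 the nontrivial solutions are m = ±√(2/3). -/
/-- fixed points of the magnetization recursion
`f(m) = 4m³(1−y)/(1 + 7y + 3m⁴(1−y))` for `0 < y < 1`. If `y > 1/25` the only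
real fixed point is `m = 0`; if `y ≤ 1/25` the fixed points are exactly
`0, ±√((2+s)/3), ±√((2−s)/3)` with `s = √((1−25y)/(1−y))`; in particular at
`y = 1/25` the nontrivial fixed points are `±√(2/3)`. -/
theorem memory_transition_fixed_points (y : ℝ) (hy0 : 0 < y) (hy1 : y < 1) :
    let f : ℝ → ℝ := fun m => 4 * m ^ 3 * (1 - y) / (1 + 7 * y + 3 * m ^ 4 * (1 - y))
    let s : ℝ := Real.sqrt ((1 - 25 * y) / (1 - y))
    ((1 / 25 < y) → ∀ m : ℝ, f m = m ↔ m = 0) ∧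
    (y ≤ 1 / 25 → ∀ m : ℝ, f m = m ↔
      (m = 0 ∨ m = Real.sqrt ((2 + s) / 3) ∨ m = -Real.sqrt ((2 + s) / 3) ∨
        m = Real.sqrt ((2 - s) / 3) ∨ m = -Real.sqrt ((2 - s) / 3))) ∧
    (y = 1 / 25 → ∀ m : ℝ, f m = m ↔
      (m = 0 ∨ m = Real.sqrt (2 / 3) ∨ m = -Real.sqrt (2 / 3))) := by
  intro f s
  have hy' : 0 < 1 - y := by linarith
  have hden : ∀ m : ℝ, (1 + 7 * y + 3 * m ^ 4 * (1 - y)) ≠ 0 := by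
    intro m
    have : (0:ℝ) ≤ m ^ 4 := by positivity
    nlinarith
  have key : ∀ m : ℝ, f m = m ↔
      m * (3 * (1 - y) * m ^ 4 - 4 * (1 - y) * m ^ 2 + (1 + 7 * y)) = 0 := by
    intro m
    show 4 * m ^ 3 * (1 - y) / (1 + 7 * y + 3 * m ^ 4 * (1 - y)) = m ↔ _
    rw [div_eq_iff (hden m)]
    constructor <;> intro h <;> linear_combination -h
  -- the main case y ≤ 1/25
  have main : y ≤ 1 / 25 → ∀ m : ℝ, f m = m ↔
      (m = 0 ∨ m = Real.sqrt ((2 + s) / 3) ∨ m = -Real.sqrt ((2 + s) / 3) ∨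
        m = Real.sqrt ((2 - s) / 3) ∨ m = -Real.sqrt ((2 - s) / 3)) := by
    intro hy m
    have h25 : (0:ℝ) ≤ 1 - 25 * y := by linarith
    have harg : (0:ℝ) ≤ (1 - 25 * y) / (1 - y) := div_nonneg h25 hy'.le
    have hs0 : 0 ≤ s := Real.sqrt_nonneg _
    have hs2 : s ^ 2 = (1 - 25 * y) / (1 - y) := Real.sq_sqrt harg
    have hs2' : s ^ 2 * (1 - y) = 1 - 25 * y := by
      rw [hs2]; field_simp
    have hs1 : s ≤ 1 := by
      rw [show (1:ℝ) = Real.sqrt 1 by simp]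
      apply Real.sqrt_le_sqrt
      rw [div_le_one hy']; linarith
    set A := Real.sqrt ((2 + s) / 3) with hA
    set B := Real.sqrt ((2 - s) / 3) with hB
    have hA2 : A ^ 2 = (2 + s) / 3 := Real.sq_sqrt (by linarith)
    have hB2 : B ^ 2 = (2 - s) / 3 := Real.sq_sqrt (by linarith)
    have h1 : (m - A) * (m + A) = m ^ 2 - (2 + s) / 3 := by
      rw [← hA2]; ring
    have h2 : (m - B) * (m + B) = m ^ 2 - (2 - s) / 3 := by
      rw [← hB2]; ring
    have hfac : m * (3 * (1 - y) * m ^ 4 - 4 * (1 - y) * m ^ 2 + (1 + 7 * y)) =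
        3 * (1 - y) * (m * ((m - A) * (m + A)) * ((m - B) * (m + B))) := by
      rw [h1, h2]
      linear_combination (m / 3) * hs2'
    rw [key, hfac]
    have h3 : (3:ℝ) * (1 - y) ≠ 0 := by positivity
    rw [mul_eq_zero, or_iff_right h3, mul_eq_zero, mul_eq_zero, mul_eq_zero, mul_eq_zero,
      sub_eq_zero, sub_eq_zero, add_eq_zero_iff_eq_neg, add_eq_zero_iff_eq_neg]
    tauto
  refine ⟨?_, main, ?_⟩
  · intro hy m
    rw [key]
    have hpos : 0 < 3 * (1 - y) * m ^ 4 - 4 * (1 - y) * m ^ 2 + (1 + 7 * y) := by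
      nlinarith [sq_nonneg (m ^ 2 - 2 / 3), sq_nonneg m]
    rw [mul_eq_zero]
    constructor
    · rintro (h | h)
      · exact h
      · exact absurd h hpos.ne'
    · intro h; exact Or.inl h
  · intro hy m
    have hs : s = 0 := by
      show Real.sqrt ((1 - 25 * y) / (1 - y)) = 0
      rw [hy]; norm_num
    have h2 := main (le_of_eq hy) m
    rw [hs] at h2
    have e1 : ((2:ℝ) + 0) / 3 = 2 / 3 := by norm_num
    have e2 : ((2:ℝ) - 0) / 3 = 2 / 3 := by norm_num
    rw [e1, e2] at h2
    rw [h2]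
    tauto
end

section
/- Let 0 < y < 1 and define f₂(μ) = 4μ³(1−y)² / ((1+7y)² + 3μ⁴(1−y)²) for μ ∈ ℝ (the denominator is strictly positive). If 1 − 50y − 143y² < 0 (equivalently y > (16√3 − 25)/143), then μ = 0 is the unique real solution of f₂(μ) = μ. If 0 < y and 1 − 50y − 143y² ≥ 0, then the set of real solutions of f₂(μ) = μ is exactly {0, ±√((2(1−y)+√(1−50y−143y²))/(3(1−y))), ±√((2(1−y)−√(1−50y−143y²))/(3(1−y)))}. -/
lemma sq_eq_aux {a b : ℝ} (hb : 0 ≤ b) :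
    a ^ 2 = b ↔ a = Real.sqrt b ∨ a = -Real.sqrt b := by
  constructor
  · intro h
    exact sq_eq_sq_iff_eq_or_eq_neg.mp (h.trans (Real.sq_sqrt hb).symm)
  · rintro (rfl | rfl) <;> simp [neg_sq, Real.sq_sqrt hb]

/-- fixed points of the two-copy recursion
`f₂(μ) = 4μ³(1−y)²/((1+7y)² + 3μ⁴(1−y)²)` for `0 < y < 1`. If
`1 − 50y − 143y² < 0` (equivalently `y > (16√3 − 25)/143`) the only real fixed
point is `μ = 0`; if `1 − 50y − 143y² ≥ 0` the fixed points are exactly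
`0, ±√((2(1−y)+√(1−50y−143y²))/(3(1−y))), ±√((2(1−y)−√(1−50y−143y²))/(3(1−y)))`. -/
theorem two_copy_fixed_points (y : ℝ) (hy0 : 0 < y) (hy1 : y < 1) :
    let f₂ : ℝ → ℝ := fun μ =>
      4 * μ ^ 3 * (1 - y) ^ 2 / ((1 + 7 * y) ^ 2 + 3 * μ ^ 4 * (1 - y) ^ 2)
    let D : ℝ := 1 - 50 * y - 143 * y ^ 2
    (D < 0 → ∀ μ : ℝ, f₂ μ = μ ↔ μ = 0) ∧
    (0 ≤ D → ∀ μ : ℝ, f₂ μ = μ ↔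
      (μ = 0 ∨
        μ = Real.sqrt ((2 * (1 - y) + Real.sqrt D) / (3 * (1 - y))) ∨
        μ = -Real.sqrt ((2 * (1 - y) + Real.sqrt D) / (3 * (1 - y))) ∨
        μ = Real.sqrt ((2 * (1 - y) - Real.sqrt D) / (3 * (1 - y))) ∨
        μ = -Real.sqrt ((2 * (1 - y) - Real.sqrt D) / (3 * (1 - y))))) := by
  intro f₂ D
  unfold f₂ D
  have hden : ∀ μ : ℝ, 0 < (1 + 7 * y) ^ 2 + 3 * μ ^ 4 * (1 - y) ^ 2 := by
    intro μ
    nlinarith [sq_nonneg (μ ^ 2 * (1 - y)), sq_nonneg y]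
  constructor
  · intro hD μ
    constructor
    · intro h
      rw [div_eq_iff (hden μ).ne'] at h
      have hP : 0 < 3 * (1 - y) ^ 2 * μ ^ 4 - 4 * (1 - y) ^ 2 * μ ^ 2 + (1 + 7 * y) ^ 2 := by
        nlinarith [sq_nonneg (3 * (1 - y) * μ ^ 2 - 2 * (1 - y))]
      have hmp : μ * (3 * (1 - y) ^ 2 * μ ^ 4 - 4 * (1 - y) ^ 2 * μ ^ 2 + (1 + 7 * y) ^ 2) = 0 := by
        linear_combination -h
      rcases mul_eq_zero.mp hmp with h0 | h0
      · exact h0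
      · exact absurd h0 hP.ne'
    · rintro rfl; norm_num
  · intro hD μ
    have hc : (0 : ℝ) < 1 - y := by linarith
    have hs0 : 0 ≤ Real.sqrt (1 - 50 * y - 143 * y ^ 2) := Real.sqrt_nonneg _
    set s := Real.sqrt (1 - 50 * y - 143 * y ^ 2) with hs_def
    have hs2 : s ^ 2 = 1 - 50 * y - 143 * y ^ 2 := Real.sq_sqrt hD
    have hsle : s ≤ 2 * (1 - y) := by nlinarith
    have htp : 0 ≤ (2 * (1 - y) + s) / (3 * (1 - y)) := by positivity
    have htm : 0 ≤ (2 * (1 - y) - s) / (3 * (1 - y)) := by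
      apply div_nonneg <;> linarith
    rw [div_eq_iff (hden μ).ne']
    have key : (4 * μ ^ 3 * (1 - y) ^ 2 = μ * ((1 + 7 * y) ^ 2 + 3 * μ ^ 4 * (1 - y) ^ 2)) ↔
        μ * ((3 * (1 - y) * μ ^ 2 - (2 * (1 - y) + s)) *
          (3 * (1 - y) * μ ^ 2 - (2 * (1 - y) - s))) = 0 := by
      constructor
      · intro h; linear_combination (-3 : ℝ) * h - μ * hs2
      · intro h; linear_combination (-(1 : ℝ) / 3) * h - (μ / 3) * hs2
    rw [key, mul_eq_zero, mul_eq_zero, sub_eq_zero, sub_eq_zero]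
    have e1 : 3 * (1 - y) * μ ^ 2 = 2 * (1 - y) + s ↔
        μ ^ 2 = (2 * (1 - y) + s) / (3 * (1 - y)) := by
      rw [eq_div_iff (by positivity : (3 : ℝ) * (1 - y) ≠ 0)]
      constructor <;> intro h <;> linarith [h]
    have e2 : 3 * (1 - y) * μ ^ 2 = 2 * (1 - y) - s ↔
        μ ^ 2 = (2 * (1 - y) - s) / (3 * (1 - y)) := by
      rw [eq_div_iff (by positivity : (3 : ℝ) * (1 - y) ≠ 0)]
      constructor <;> intro h <;> linarith [h]
    rw [e1, e2, sq_eq_aux htp, sq_eq_aux htm]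
    simp only [or_assoc]
end
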